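/- arXiv:2509.23160 — 6 statements merged into one kernel-verified Lean document; each statement's English description precedes it below -/
import Mathlib

section
/- Let 1 ≤ i < k ≤ n, and let F be a family of k-subsets of [n]. If the i-shadow of F has size at most C(x,i) for some real x > k-1, then |F| ≤ C(x,k), where C(x,j) denotes the generalized binomial coefficient x(x-1)···(x-j+1)/j!. -/
open Finset

/-- Generalized binomial coefficient `x(x-1)⋯(x-j+1)/j!` for real `x`. -/
noncomputable def genChoose (x : ℝ) (j : ℕ) : ℝ :=
  (∏ t ∈ Finset.range j, (x - t)) / (Nat.factorial j)

/-- The `i`-shadow of a family `F` of subsets of `Fin n`: all `i`-subsets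
contained in some member of `F`. -/
def iShadow (n i : ℕ) (F : Finset (Finset (Fin n))) : Finset (Finset (Fin n)) :=
  (Finset.powersetCard i (Finset.univ : Finset (Fin n))).filter
    (fun G => ∃ A ∈ F, G ⊆ A)

open scoped FinsetFamily

/-!
Frankl's argument for shifted families: let `e` be the least point of the ground set, `𝒜₁` the
link of `e` (members containing `e`, with `e` removed) and `𝒜₀` the members avoiding `e`. Then
`|𝒜| = |𝒜₀| + |𝒜₁|`, shiftedness gives `∂𝒜₀ ⊆ 𝒜₁`, and `|∂𝒜₁| + |𝒜₁| ≤ |∂𝒜|`. If `𝒜` consists of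
`k`-sets and `|∂𝒜| ≤ C(x, k-1)`, then `|𝒜₁| ≤ C(x-1, k-1)`: otherwise induction on the ground
set (or, when `k = 2`, nonemptiness of `𝒜₁`) gives `|∂𝒜₁| ≥ C(x-1, k-2)`, and Pascal's rule
`C(x, k-1) = C(x-1, k-1) + C(x-1, k-2)` is violated. Hence `|∂𝒜₀| ≤ C(x-1, k-1)`, induction
gives `|𝒜₀| ≤ C(x-1, k)`, and Pascal's rule again gives `|𝒜| ≤ C(x, k)`.

An arbitrary family reduces to this case by Kruskal–Katona: the colex initial segment of the same
size is shifted and has no larger shadow. The `i`-shadow is the `(k-i)`-fold shadow, so the one-step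
statement, applied level by level from `i` up to `k`, gives the theorem.
-/

theorem genChoose_eq_ringChoose (x : ℝ) (j : ℕ) : genChoose x j = Ring.choose x j := by
  have h := Ring.descPochhammer_eq_factorial_smul_choose x j
  rw [← Polynomial.aeval_eq_smeval, ← Polynomial.eval_map_algebraMap, descPochhammer_map,
    descPochhammer_eval_eq_prod_range, nsmul_eq_mul] at h
  rw [genChoose, h, mul_div_cancel_left₀ _ (by positivity)]

theorem genChoose_succ_succ (x : ℝ) (j : ℕ) :
    genChoose (x + 1) (j + 1) = genChoose x j + genChoose x (j + 1) := by
  simp only [genChoose_eq_ringChoose, Ring.choose_succ_succ]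

theorem genChoose_natCast (m j : ℕ) : genChoose m j = m.choose j := by
  rw [genChoose_eq_ringChoose, Ring.choose_natCast]

theorem genChoose_zero_right (x : ℝ) : genChoose x 0 = 1 := by
  simp [genChoose]

theorem genChoose_one_right (x : ℝ) : genChoose x 1 = x := by
  simp [genChoose]

theorem genChoose_nonneg {x : ℝ} {j : ℕ} (hx : (j : ℝ) - 1 ≤ x) : 0 ≤ genChoose x j := by
  refine div_nonneg (prod_nonneg fun t ht => ?_) (Nat.cast_nonneg _)
  have : (t : ℝ) + 1 ≤ j := by exact_mod_cast mem_range.1 ht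
  linarith

theorem genChoose_lt_genChoose {x y : ℝ} {j : ℕ} (hj : j ≠ 0) (hx : (j : ℝ) - 1 < x)
    (hxy : x < y) : genChoose x j < genChoose y j := by
  refine div_lt_div_of_pos_right ?_ (by positivity)
  refine prod_lt_prod_of_nonempty (fun t ht => ?_) (fun t _ => by linarith)
    (nonempty_range_iff.2 hj)
  have : (t : ℝ) + 1 ≤ j := by exact_mod_cast mem_range.1 ht
  linarith

theorem genChoose_lt_of_lt_add_one {x : ℝ} {j : ℕ} (hj : j ≠ 0) (hx : (j : ℝ) - 1 < x)
    (hxj : x < j + 1) : genChoose x j < j + 1 := by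
  have h := genChoose_lt_genChoose hj hx hxj
  rwa [← Nat.cast_add_one, genChoose_natCast, Nat.choose_succ_self_right, Nat.cast_add_one] at h

namespace Finset

section

variable {α : Type*} [DecidableEq α]

theorem card_le_card_shadow {𝒜 : Finset (Finset α)} {A : Finset α} (hA : A ∈ 𝒜) :
    #A ≤ #(∂ 𝒜) :=
  card_le_card_of_injOn A.erase (fun _ ha => erase_mem_shadow hA ha) A.erase_injOn

theorem card_shadow_add_card_memberSubfamily_le (e : α) (𝒜 : Finset (Finset α)) :
    #(∂ (𝒜.memberSubfamily e)) + #(𝒜.memberSubfamily e) ≤ #(∂ 𝒜) := by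
  have h₁ : 𝒜.memberSubfamily e ⊆ (∂ 𝒜).nonMemberSubfamily e := by
    intro A hA
    rw [mem_memberSubfamily] at hA
    have h := erase_mem_shadow hA.1 (mem_insert_self e A)
    rw [erase_insert hA.2] at h
    exact mem_nonMemberSubfamily.2 ⟨h, hA.2⟩
  have h₂ : ∂ (𝒜.memberSubfamily e) ⊆ (∂ 𝒜).memberSubfamily e := by
    intro B hB
    obtain ⟨A, hA, a, ha, rfl⟩ := mem_shadow_iff.1 hB
    rw [mem_memberSubfamily] at hA ⊢
    have hae : a ≠ e := ne_of_mem_of_not_mem ha hA.2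
    refine ⟨?_, fun he => hA.2 (mem_of_mem_erase he)⟩
    rw [← erase_insert_of_ne hae.symm]
    exact erase_mem_shadow hA.1 (mem_insert_of_mem ha)
  rw [← card_memberSubfamily_add_card_nonMemberSubfamily e (∂ 𝒜)]
  exact add_le_add (card_le_card h₂) (card_le_card h₁)

theorem eq_empty_of_card_shadow_le_genChoose {𝒜 : Finset (Finset α)} {j : ℕ} {x : ℝ}
    (hj : j ≠ 0) (hsized : (𝒜 : Set (Finset α)).Sized (j + 1)) (hx : (j : ℝ) - 1 < x)
    (hxj : x < j + 1) (hshadow : (#(∂ 𝒜) : ℝ) ≤ genChoose x j) : 𝒜 = ∅ := by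
  refine eq_empty_of_forall_notMem fun A hA => ?_
  have hcard : ((j + 1 : ℕ) : ℝ) ≤ #(∂ 𝒜) := by
    exact_mod_cast hsized hA ▸ card_le_card_shadow hA
  push_cast at hcard
  linarith [genChoose_lt_of_lt_add_one hj hx hxj]

theorem _root_.Set.Sized.memberSubfamily {𝒜 : Finset (Finset α)} {r : ℕ}
    (h : (𝒜 : Set (Finset α)).Sized (r + 1)) (e : α) :
    (𝒜.memberSubfamily e : Set (Finset α)).Sized r := fun A hA => by
  rw [mem_coe, mem_memberSubfamily] at hA
  simpa [card_insert_of_notMem hA.2] using h hA.1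

theorem _root_.Set.Sized.nonMemberSubfamily {𝒜 : Finset (Finset α)} {r : ℕ}
    (h : (𝒜 : Set (Finset α)).Sized r) (e : α) :
    (𝒜.nonMemberSubfamily e : Set (Finset α)).Sized r :=
  h.mono (coe_subset.2 (filter_subset _ _))

end

section Shifted

variable {α : Type*} [LinearOrder α] {s : Finset α} {𝒜 : Finset (Finset α)}

structure IsShiftedOn (s : Finset α) (𝒜 : Finset (Finset α)) : Prop where
  subset : ∀ ⦃A⦄, A ∈ 𝒜 → A ⊆ s
  insert_erase_mem : ∀ ⦃A⦄, A ∈ 𝒜 → ∀ ⦃a⦄, a ∈ A → ∀ ⦃b⦄, b ∈ s → b < a → b ∉ A →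
    insert b (A.erase a) ∈ 𝒜

theorem IsShiftedOn.memberSubfamily (h : IsShiftedOn s 𝒜) (e : α) :
    IsShiftedOn (s.erase e) (𝒜.memberSubfamily e) where
  subset A hA a ha := by
    rw [mem_memberSubfamily] at hA
    exact mem_erase.2 ⟨ne_of_mem_of_not_mem ha hA.2, h.subset hA.1 (mem_insert_of_mem ha)⟩
  insert_erase_mem A hA a ha b hb hba hbA := by
    rw [mem_memberSubfamily] at hA ⊢
    obtain ⟨hbe, hb⟩ := mem_erase.1 hb
    have hae : a ≠ e := ne_of_mem_of_not_mem ha hA.2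
    have h' := h.insert_erase_mem hA.1 (mem_insert_of_mem ha) hb hba (by simp [hbe, hbA])
    rw [erase_insert_of_ne hae.symm, insert_comm] at h'
    exact ⟨h', by simp [hbe.symm, hA.2]⟩

theorem IsShiftedOn.nonMemberSubfamily (h : IsShiftedOn s 𝒜) (e : α) :
    IsShiftedOn (s.erase e) (𝒜.nonMemberSubfamily e) where
  subset A hA a ha := by
    rw [mem_nonMemberSubfamily] at hA
    exact mem_erase.2 ⟨ne_of_mem_of_not_mem ha hA.2, h.subset hA.1 ha⟩
  insert_erase_mem A hA a ha b hb hba hbA := by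
    rw [mem_nonMemberSubfamily] at hA ⊢
    obtain ⟨hbe, hb⟩ := mem_erase.1 hb
    exact ⟨h.insert_erase_mem hA.1 ha hb hba hbA, by simp [hbe.symm, hA.2]⟩

theorem IsShiftedOn.shadow_nonMemberSubfamily_subset (h : IsShiftedOn s 𝒜) (hs : s.Nonempty) :
    ∂ (𝒜.nonMemberSubfamily (s.min' hs)) ⊆ 𝒜.memberSubfamily (s.min' hs) := by
  intro B hB
  obtain ⟨A, hA, a, ha, rfl⟩ := mem_shadow_iff.1 hB
  rw [mem_nonMemberSubfamily] at hA
  have hlt : s.min' hs < a :=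
    (s.min'_le a (h.subset hA.1 ha)).lt_of_ne (ne_of_mem_of_not_mem ha hA.2).symm
  exact mem_memberSubfamily.2
    ⟨h.insert_erase_mem hA.1 ha (s.min'_mem hs) hlt hA.2, fun h' => hA.2 (mem_of_mem_erase h')⟩

theorem IsShiftedOn.card_le_genChoose {k : ℕ} {x : ℝ} (h𝒜 : IsShiftedOn s 𝒜)
    (hsized : (𝒜 : Set (Finset α)).Sized (k + 2)) (hx : (k : ℝ) + 1 ≤ x)
    (hshadow : (#(∂ 𝒜) : ℝ) ≤ genChoose x (k + 1)) : (#𝒜 : ℝ) ≤ genChoose x (k + 2) := by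
  induction s using Finset.strongInduction generalizing k 𝒜 x with
  | H s ih =>
  obtain rfl | ⟨A, hA⟩ := 𝒜.eq_empty_or_nonempty
  · simpa using genChoose_nonneg (by push_cast; linarith)
  obtain hxk | hkx := lt_or_ge x (k + 2)
  · exact absurd (eq_empty_of_card_shadow_le_genChoose k.succ_ne_zero hsized
      (by push_cast; linarith) (by push_cast; linarith) hshadow) (ne_empty_of_mem hA)
  obtain ⟨y, rfl⟩ : ∃ y, x = y + 1 := ⟨x - 1, by ring⟩
  have hs : s.Nonempty := (card_pos.1 (by rw [hsized hA]; omega)).mono (h𝒜.subset hA)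
  set e := s.min' hs
  have hsub : s.erase e ⊂ s := erase_ssubset (s.min'_mem hs)
  have hlink : (#(𝒜.memberSubfamily e) : ℝ) ≤ genChoose y (k + 1) := by
    by_contra! hlt
    have hlink_shadow : genChoose y k ≤ #(∂ (𝒜.memberSubfamily e)) := by
      rcases k with _ | k
      · obtain ⟨B, hB⟩ : (𝒜.memberSubfamily e).Nonempty := by
          rw [← card_pos, ← Nat.cast_pos (α := ℝ)]
          rw [genChoose_one_right] at hlt
          push_cast at hkx
          linarith
        rw [genChoose_zero_right]
        exact_mod_cast hsized.memberSubfamily e hB ▸ card_le_card_shadow hB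
      · by_contra! h
        exact hlt.not_ge (ih _ hsub (h𝒜.memberSubfamily e) (hsized.memberSubfamily e)
          (by push_cast at hkx ⊢; linarith) h.le)
    have hcard : ((#(∂ (𝒜.memberSubfamily e)) + #(𝒜.memberSubfamily e) : ℕ) : ℝ) ≤ #(∂ 𝒜) := by
      exact_mod_cast card_shadow_add_card_memberSubfamily_le e 𝒜
    rw [genChoose_succ_succ] at hshadow
    push_cast at hcard
    linarith
  have hrest := ih _ hsub (h𝒜.nonMemberSubfamily e) (hsized.nonMemberSubfamily e) (by linarith)
    ((Nat.cast_le.2 (card_le_card (h𝒜.shadow_nonMemberSubfamily_subset hs))).trans hlink)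
  rw [← card_memberSubfamily_add_card_nonMemberSubfamily e 𝒜, genChoose_succ_succ]
  push_cast
  linarith

theorem Colex.IsInitSeg.isShiftedOn_univ [Fintype α] {r : ℕ} (h : Colex.IsInitSeg 𝒜 r) :
    IsShiftedOn univ 𝒜 where
  subset A _ := subset_univ A
  insert_erase_mem A hA a ha b _ hba hbA := by
    have hb : b ∉ A.erase a := fun h' => hbA (mem_of_mem_erase h')
    refine h.2 hA ⟨?_, ?_⟩
    · conv_rhs => rw [← insert_erase ha]
      exact (Colex.insert_lt_insert hb (notMem_erase a A)).2 hba
    · rw [card_insert_of_notMem hb, card_erase_add_one ha, h.1 hA]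

theorem Colex.exists_isInitSeg_card_eq [Fintype α] {r m : ℕ}
    (hm : m ≤ (Fintype.card α).choose r) :
    ∃ 𝒞 : Finset (Finset α), #𝒞 = m ∧ Colex.IsInitSeg 𝒞 r := by
  induction m with
  | zero => exact ⟨∅, card_empty, Colex.isInitSeg_empty⟩
  | succ m ih =>
    obtain ⟨𝒞, h𝒞card, h𝒞⟩ := ih (by omega)
    have hrest : (powersetCard r univ \ 𝒞).Nonempty := by
      rw [sdiff_nonempty]
      intro h
      have := card_le_card h
      rw [card_powersetCard, card_univ] at this
      omega
    obtain ⟨A, hA, hmin⟩ := exists_min_image _ toColex hrest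
    rw [mem_sdiff, mem_powersetCard] at hA
    refine ⟨insert A 𝒞, by rw [card_insert_of_notMem hA.2, h𝒞card], ?_, ?_⟩
    · rw [coe_insert, Set.insert_eq, Set.sized_union, Set.sized_singleton]
      exact ⟨hA.1.2, h𝒞.1⟩
    · intro S T hS hT
      rw [mem_insert] at hS ⊢
      rcases hS with rfl | hS
      · by_contra! hT𝒞
        exact hT.1.not_ge (hmin T (mem_sdiff.2 ⟨mem_powersetCard.2 ⟨subset_univ T, hT.2⟩, hT𝒞.2⟩))
      · exact Or.inr (h𝒞.2 hS hT)

end Shifted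

end Finset

section KruskalKatona

variable {n : ℕ} {𝒜 : Finset (Finset (Fin n))}

theorem card_le_genChoose_of_card_shadow_le {k : ℕ} {x : ℝ}
    (h𝒜 : (𝒜 : Set (Finset (Fin n))).Sized (k + 2)) (hx : (k : ℝ) + 1 ≤ x)
    (hshadow : (#(∂ 𝒜) : ℝ) ≤ genChoose x (k + 1)) : (#𝒜 : ℝ) ≤ genChoose x (k + 2) := by
  obtain ⟨𝒞, h𝒞card, h𝒞⟩ := Colex.exists_isInitSeg_card_eq h𝒜.card_le
  rw [← h𝒞card]
  exact h𝒞.isShiftedOn_univ.card_le_genChoose h𝒞.1 hx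
    ((Nat.cast_le.2 (kruskal_katona h𝒜 h𝒞card.le h𝒞)).trans hshadow)

theorem card_le_genChoose_of_card_shadow_iterate_le {j d : ℕ} {x : ℝ}
    (h𝒜 : (𝒜 : Set (Finset (Fin n))).Sized (j + 1 + d)) (hx : (j : ℝ) + d < x)
    (hshadow : (#(∂^[d] 𝒜) : ℝ) ≤ genChoose x (j + 1)) :
    (#𝒜 : ℝ) ≤ genChoose x (j + 1 + d) := by
  induction d generalizing 𝒜 with
  | zero => simpa using hshadow
  | succ d ih =>
    rw [show j + 1 + (d + 1) = j + d + 2 by omega] at h𝒜 ⊢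
    have h₁ := ih (by convert h𝒜.shadow using 1; omega) (by push_cast at hx; linarith) hshadow
    rw [show j + 1 + d = j + d + 1 by omega] at h₁
    exact card_le_genChoose_of_card_shadow_le h𝒜 (by push_cast at hx ⊢; linarith) h₁

end KruskalKatona

theorem iShadow_eq_shadow_iterate {n i d : ℕ} {F : Finset (Finset (Fin n))}
    (hF : (F : Set (Finset (Fin n))).Sized (i + d)) : iShadow n i F = ∂^[d] F := by
  ext B
  simp only [iShadow, mem_filter, mem_powersetCard, subset_univ, true_and,
    mem_shadow_iterate_iff_exists_sdiff]
  constructor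
  · rintro ⟨hB, A, hA, hBA⟩
    exact ⟨A, hA, hBA, by rw [card_sdiff_of_subset hBA, hF hA, hB]; omega⟩
  · rintro ⟨A, hA, hBA, hsd⟩
    rw [card_sdiff_of_subset hBA, hF hA] at hsd
    have := card_le_card hBA
    rw [hF hA] at this
    exact ⟨by omega, A, hA, hBA⟩

theorem stmt0_general {n k i : ℕ} (hi : 1 ≤ i) (hik : i < k)
    (F : Finset (Finset (Fin n))) (hF : ∀ A ∈ F, A.card = k)
    (x : ℝ) (hx : (k : ℝ) - 1 < x)
    (hshadow : ((iShadow n i F).card : ℝ) ≤ genChoose x i) :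
    (F.card : ℝ) ≤ genChoose x k := by
  obtain ⟨j, rfl⟩ := Nat.exists_eq_add_of_le' hi
  obtain ⟨d, rfl⟩ := Nat.exists_eq_add_of_le hik.le
  have hsized : (F : Set (Finset (Fin n))).Sized (j + 1 + d) := fun A hA => hF A hA
  rw [iShadow_eq_shadow_iterate hsized] at hshadow
  exact card_le_genChoose_of_card_shadow_iterate_le hsized (by push_cast at hx; linarith) hshadow

theorem stmt0 {n k i : ℕ} (hi : 1 ≤ i) (hik : i < k) (hkn : k ≤ n)
    (F : Finset (Finset (Fin n))) (hF : ∀ A ∈ F, A.card = k)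
    (x : ℝ) (hx : (k : ℝ) - 1 < x)
    (hshadow : ((iShadow n i F).card : ℝ) ≤ genChoose x i) :
    (F.card : ℝ) ≤ genChoose x k :=
  stmt0_general hi hik F hF x hx hshadow
end

section
/- Let n = 2k with k ≥ 2 and let L ⊆ {0,1,...,k} satisfy L = k - L (i.e., i ∈ L iff k - i ∈ L) and L ≠ {0,...,k}. If A, B ⊆ C([2k],k) are non-empty cross L-intersecting families, then |A| + |B| ≤ Σ_{i∈L} C(k,i)·C(k,k-i) + 2. -/
/-!
Put `J = {0, …, k} \ L` and join two `k`-sets when they meet in a number of points lying in `J`.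
Cross `L`-intersection says that `B` avoids the neighbourhood `N(A)`, and since `J = k - J`,
`N(A) = N(X)` for the complement-closed family `X = A ∪ {aᶜ | a ∈ A}`. It then suffices to show
`|N(X)| ≥ |X| + D - 2` with `D = ∑_{j ∈ J} C(k, j) C(k, k - j) = |N({x})|` whenever `N(X)` is
not the set `V` of all `k`-sets. This is Hamidoune's atom method: among such `X` take one
minimising `|N(X)| - |X|`, then `|X|`. Submodularity of `|N(X)| - |X|` and the duality
`X ↦ V \ N(X)` show that this atom is a block for the symmetric group of the ground set; a
complement-closed block containing some `y ∉ {x, xᶜ}` is stabilised by every transposition,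
hence is all of `V`. So the atom is `{x, xᶜ}`, whose defect is `D - 2`.
-/

open Finset Equiv MulAction
open scoped Pointwise

variable {α : Type*} [DecidableEq α]

theorem swap_smul_finset_eq_self {a b : α} {s : Finset α} (ha : a ∈ s) (hb : b ∈ s) :
    swap a b • s = s := by
  refine eq_of_subset_of_card_le (fun _ hc ↦ ?_) (card_smul_finset _ _).ge
  obtain ⟨c, hc, rfl⟩ := mem_smul_finset.1 hc
  rw [Perm.smul_def, swap_apply_def]
  split_ifs <;> assumption

theorem exists_perm_smul_finset_eq {s t : Finset α} (h : #s = #t) :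
    ∃ g : Perm α, g • s = t := by
  have := Set.powersetCard.isPretransitive (α := α) (n := #t)
  obtain ⟨g, hg⟩ := exists_smul_eq (Perm α) (⟨s, h⟩ : Set.powersetCard α #t) ⟨t, rfl⟩
  exact ⟨g, by simpa using congrArg Subtype.val hg⟩

variable [Fintype α]

/-- Transpositions fixing a member of the block stabilise it; those fixing `x`, `y` or `yᶜ`
connect all of `α` once `x ∩ y` and `x \ y` are nonempty, so they generate `Perm α`. -/
theorem mem_of_isBlock {𝒜 : Set (Finset α)} (h𝒜 : IsBlock (Perm α) 𝒜) {x y : Finset α}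
    (hx : x ∈ 𝒜) (hy : y ∈ 𝒜) (hyc : yᶜ ∈ 𝒜) (hxy : (x ∩ y).Nonempty) (hyx : (x \ y).Nonempty) {s : Finset α} (hs : #x = #s) :
    s ∈ 𝒜 := by
  set H := stabilizer (Perm α) 𝒜
  have hswap : ∀ w ∈ 𝒜, ∀ a ∈ w, ∀ b ∈ w, swap a b ∈ H := fun w hw a ha b hb ↦
    h𝒜.stabilizer_le hw (swap_smul_finset_eq_self ha hb)
  obtain ⟨c, hc⟩ := hxy
  obtain ⟨d, hd⟩ := hyx
  rw [mem_inter] at hc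
  rw [mem_sdiff] at hd
  have hswap_c : ∀ a, swap a c ∈ H := by
    intro a
    by_cases hax : a ∈ x
    · exact hswap x hx a hax c hc.1
    by_cases hay : a ∈ y
    · exact hswap y hy a hay c hc.2
    refine SubmonoidClass.swap_mem_trans H (b := d) ?_ (hswap x hx d hd.1 c hc.1)
    exact hswap _ hyc a (mem_compl.2 hay) d (mem_compl.2 hd.2)
  have hH : H = ⊤ := by
    rw [eq_top_iff, ← Perm.closure_isSwap, Subgroup.closure_le]
    rintro _ ⟨a, b, -, rfl⟩
    exact SubmonoidClass.swap_mem_trans H (hswap_c a) (swap_comm b c ▸ hswap_c b)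
  obtain ⟨g, rfl⟩ := exists_perm_smul_finset_eq hs
  have hg : g • 𝒜 = 𝒜 := mem_stabilizer_iff.1 (show g ∈ H from hH ▸ Subgroup.mem_top g)
  exact hg ▸ Set.smul_mem_smul_set hx

theorem card_compl_inter (x y : Finset α) : #(xᶜ ∩ y) = #y - #(x ∩ y) := by
  rw [← card_sdiff, sdiff_eq_inter_compl, inter_comm]

theorem card_filter_card_inter_eq (x : Finset α) {m j : ℕ} (hj : j ≤ m) :
    #{y ∈ powersetCard m univ | #(x ∩ y) = j} = (#x).choose j * (#xᶜ).choose (m - j) := by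
  have hsplit {u v : Finset α} (hu : u ⊆ x) (hv : v ⊆ xᶜ) :
      x ∩ (u ∪ v) = u ∧ xᶜ ∩ (u ∪ v) = v := by
    constructor <;> ext a <;> have := @hu a <;> have := @hv a <;> simp at * <;> tauto
  rw [← card_powersetCard, ← card_powersetCard, ← card_product]
  refine card_nbij' (fun y ↦ (x ∩ y, xᶜ ∩ y)) (fun p ↦ p.1 ∪ p.2) ?_ ?_ ?_ ?_
  · intro y hy
    simp_all [card_compl_inter]
  · rintro ⟨u, v⟩ h
    simp only [coe_product, Set.mem_prod, mem_coe, mem_powersetCard] at h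
    obtain ⟨⟨hu, rfl⟩, hv, hvc⟩ := h
    have hdisj : Disjoint u v := disjoint_of_subset_left hu (subset_compl_iff_disjoint_left.1 hv)
    simp [card_union_of_disjoint hdisj, hvc, (hsplit hu hv).1]
    omega
  · intro y _
    simp [← union_inter_distrib_right]
  · rintro ⟨u, v⟩ h
    simp only [coe_product, Set.mem_prod, mem_coe, mem_powersetCard] at h
    simp [hsplit h.1.1 h.2.1]

namespace GeneralizedJohnson

variable {k : ℕ} {J : Finset ℕ} {X Y : Finset (Finset α)} {x y : Finset α}

def nbhd (k : ℕ) (J : Finset ℕ) (X : Finset (Finset α)) : Finset (Finset α) :=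
  {y ∈ powersetCard k univ | ∃ x ∈ X, #(x ∩ y) ∈ J}

theorem mem_nbhd : y ∈ nbhd k J X ↔ #y = k ∧ ∃ x ∈ X, #(x ∩ y) ∈ J := by
  simp [nbhd]

theorem nbhd_subset : nbhd k J X ⊆ powersetCard k univ := filter_subset _ _

theorem nbhd_mono (h : X ⊆ Y) : nbhd k J X ⊆ nbhd k J Y := fun _ hy ↦
  let ⟨hyk, x, hx, hxy⟩ := mem_nbhd.1 hy
  mem_nbhd.2 ⟨hyk, x, h hx, hxy⟩

theorem nbhd_union : nbhd k J (X ∪ Y) = nbhd k J X ∪ nbhd k J Y := by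
  ext y
  simp only [mem_nbhd, mem_union, or_and_right, exists_or, and_or_left]

theorem nbhd_inter_subset : nbhd k J (X ∩ Y) ⊆ nbhd k J X ∩ nbhd k J Y :=
  subset_inter (nbhd_mono inter_subset_left) (nbhd_mono inter_subset_right)

theorem smul_nbhd (g : Perm α) : g • nbhd k J X = nbhd k J (g • X) := by
  ext y
  have (x : Finset α) : #(x ∩ g⁻¹ • y) = #(g • x ∩ y) := by
    rw [← card_smul_finset g, smul_finset_inter, smul_inv_smul]
  rw [← inv_smul_mem_iff, mem_nbhd, mem_nbhd, card_smul_finset, smul_finset_def (s := X),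
    exists_mem_image]
  simp only [this]

theorem nbhd_sdiff_nbhd_subset :
    nbhd k J (powersetCard k univ \ nbhd k J X) ⊆ powersetCard k univ \ X := by
  intro y hy
  obtain ⟨hyk, w, hw, hwy⟩ := mem_nbhd.1 hy
  rw [mem_sdiff] at hw ⊢
  refine ⟨by simpa using hyk, fun hyX ↦ hw.2 (mem_nbhd.2 ⟨by simpa using hw.1, y, hyX, ?_⟩)⟩
  rwa [inter_comm]

theorem card_compl_inter_mem_iff (hJsymm : ∀ j ≤ k, j ∈ J ↔ k - j ∈ J) (hy : #y = k) :
    #(xᶜ ∩ y) ∈ J ↔ #(x ∩ y) ∈ J := by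
  rw [card_compl_inter, hy, ← hJsymm _ ((card_le_card inter_subset_right).trans hy.le)]

theorem nbhd_union_image_compl (hJsymm : ∀ j ≤ k, j ∈ J ↔ k - j ∈ J) :
    nbhd k J (X ∪ X.image compl) = nbhd k J X := by
  ext y
  simp only [mem_nbhd, mem_union, mem_image, and_congr_right_iff]
  intro hy
  constructor
  · rintro ⟨x, hx | ⟨a, ha, rfl⟩, hxy⟩
    · exact ⟨x, hx, hxy⟩
    · exact ⟨a, ha, (card_compl_inter_mem_iff hJsymm hy).1 hxy⟩
  · rintro ⟨x, hx, hxy⟩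
    exact ⟨x, Or.inl hx, hxy⟩

section HalfSize

variable (hα : Fintype.card α = 2 * k)
include hα

theorem compl_mem_powersetCard (hx : x ∈ powersetCard k univ) : xᶜ ∈ powersetCard k univ := by
  simp_all [card_compl]
  omega

theorem card_compl_inter_compl (hx : #x = k) (hy : #y = k) : #(xᶜ ∩ yᶜ) = #(x ∩ y) := by
  have := card_le_card (inter_subset_left (s₁ := x) (s₂ := y))
  rw [card_compl_inter, card_compl, inter_comm x, card_compl_inter, inter_comm y]
  omega

theorem compl_mem_nbhd (hX : ∀ x ∈ X, xᶜ ∈ X) (hXk : X ⊆ powersetCard k univ)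
    (hy : y ∈ nbhd k J X) : yᶜ ∈ nbhd k J X := by
  obtain ⟨hyk, x, hx, hxy⟩ := mem_nbhd.1 hy
  refine mem_nbhd.2 ⟨by simp [card_compl, hα, hyk]; omega, xᶜ, hX x hx, ?_⟩
  rwa [card_compl_inter_compl hα (by simpa using hXk hx) hyk]

theorem card_filter_card_inter_eq_of_card_eq (hx : #x = k) {j : ℕ} (hj : j ≤ k) :
    #{y ∈ powersetCard k univ | #(x ∩ y) = j} = k.choose j * k.choose (k - j) := by
  have hxc : #xᶜ = k := by rw [card_compl, hα, hx]; omega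
  rw [card_filter_card_inter_eq x hj, hx, hxc]

theorem card_nbhd_singleton (hJ : J ⊆ range (k + 1)) (hx : #x = k) :
    #(nbhd k J {x}) = ∑ j ∈ J, k.choose j * k.choose (k - j) := by
  have hnbhd : nbhd k J {x} = {y ∈ powersetCard k (univ : Finset α) | #(x ∩ y) ∈ J} := by
    simp [nbhd]
  rw [hnbhd, card_eq_sum_card_fiberwise (f := fun y ↦ #(x ∩ y)) (t := J)
    fun y hy ↦ mem_coe.2 (mem_filter.1 hy).2]
  refine sum_congr rfl fun j hj ↦ ?_
  rw [filter_filter, ← card_filter_card_inter_eq_of_card_eq hα hx (by grind)]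
  congr 1
  exact filter_congr fun y _ ↦ ⟨And.right, fun h ↦ ⟨show #(x ∩ y) ∈ J from h ▸ hj, h⟩⟩

theorem nbhd_powersetCard (hJ : J ⊆ range (k + 1)) (hJne : J.Nonempty) :
    nbhd k J (powersetCard k (univ : Finset α)) = powersetCard k univ := by
  refine subset_antisymm nbhd_subset fun y hy ↦ ?_
  have hyk : #y = k := by simpa using hy
  have hpos : 0 < #(nbhd k J {y}) := by
    rw [card_nbhd_singleton hα hJ hyk]
    exact sum_pos (fun j hj ↦ Nat.mul_pos (Nat.choose_pos (by grind))
      (Nat.choose_pos (Nat.sub_le k j))) hJne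
  obtain ⟨x, hx⟩ := card_pos.1 hpos
  obtain ⟨hxk, hyx⟩ : #x = k ∧ #(y ∩ x) ∈ J := by simpa [mem_nbhd] using hx
  exact mem_nbhd.2 ⟨hyk, x, by simpa using hxk, by rwa [inter_comm]⟩

end HalfSize

/-- Hamidoune's fragments, restricted to complement-closed families. -/
structure IsFragment (k : ℕ) (J : Finset ℕ) (X : Finset (Finset α)) : Prop where
  subset : X ⊆ powersetCard k univ
  compl_mem : ∀ x ∈ X, xᶜ ∈ X
  nonempty : X.Nonempty
  nbhd_ne : nbhd k J X ≠ powersetCard k univ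

def defect (k : ℕ) (J : Finset ℕ) (X : Finset (Finset α)) : ℤ := #(nbhd k J X) - #X

theorem defect_inter_add_defect_union_le :
    defect k J (X ∩ Y) + defect k J (X ∪ Y) ≤ defect k J X + defect k J Y := by
  have hinter := card_le_card (nbhd_inter_subset (k := k) (J := J) (X := X) (Y := Y))
  have hnbhd := card_union_add_card_inter (nbhd k J X) (nbhd k J Y)
  have hcard := card_union_add_card_inter X Y
  rw [← nbhd_union] at hnbhd
  simp only [defect]
  omega

theorem smul_powersetCard (g : Perm α) :
    g • powersetCard k (univ : Finset α) = powersetCard k univ := by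
  ext y
  rw [← inv_smul_mem_iff]
  simp [card_smul_finset]

theorem defect_smul (g : Perm α) : defect k J (g • X) = defect k J X := by
  rw [defect, defect, ← smul_nbhd, card_smul_finset, card_smul_finset]

namespace IsFragment

theorem inter (hX : IsFragment k J X) (hY : IsFragment k J Y) (h : (X ∩ Y).Nonempty) :
    IsFragment k J (X ∩ Y) where
  subset := inter_subset_left.trans hX.subset
  compl_mem x hx :=
    mem_inter.2 ⟨hX.compl_mem x (mem_inter.1 hx).1, hY.compl_mem x (mem_inter.1 hx).2⟩
  nonempty := h
  nbhd_ne h' := hX.nbhd_ne <| subset_antisymm nbhd_subset (h' ▸ nbhd_mono inter_subset_left)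

theorem union (hX : IsFragment k J X) (hY : IsFragment k J Y)
    (h : nbhd k J (X ∪ Y) ≠ powersetCard k univ) : IsFragment k J (X ∪ Y) where
  subset := union_subset hX.subset hY.subset
  compl_mem x hx := (mem_union.1 hx).elim (fun h ↦ mem_union_left _ (hX.compl_mem x h))
    (fun h ↦ mem_union_right _ (hY.compl_mem x h))
  nonempty := hX.nonempty.mono subset_union_left
  nbhd_ne := h

theorem smul (hX : IsFragment k J X) (g : Perm α) : IsFragment k J (g • X) where
  subset := by
    intro y hy
    obtain ⟨x, hx, rfl⟩ := mem_smul_finset.1 hy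
    simpa using hX.subset hx
  compl_mem := by
    intro y hy
    obtain ⟨x, hx, rfl⟩ := mem_smul_finset.1 hy
    rw [compl_eq_univ_sdiff, ← smul_finset_univ (a := g), ← smul_finset_sdiff,
      ← compl_eq_univ_sdiff]
    exact smul_mem_smul_finset (hX.compl_mem x hx)
  nonempty := hX.nonempty.smul_finset
  nbhd_ne h := hX.nbhd_ne <| by
    rwa [← smul_nbhd, smul_eq_iff_eq_inv_smul, smul_powersetCard] at h

theorem sdiff_nbhd (hα : Fintype.card α = 2 * k) (hX : IsFragment k J X) :
    IsFragment k J (powersetCard k univ \ nbhd k J X) where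
  subset := sdiff_subset
  compl_mem y hy := by
    rw [mem_sdiff] at hy ⊢
    refine ⟨compl_mem_powersetCard hα hy.1, fun h ↦ hy.2 ?_⟩
    simpa using compl_mem_nbhd hα hX.compl_mem hX.subset h
  nonempty := sdiff_nonempty.2 fun h ↦ hX.nbhd_ne (subset_antisymm nbhd_subset h)
  nbhd_ne h := by
    obtain ⟨x, hx⟩ := hX.nonempty
    have hx' : x ∈ nbhd k J (powersetCard k univ \ nbhd k J X) := by
      rw [h]; exact hX.subset hx
    exact (mem_sdiff.1 (nbhd_sdiff_nbhd_subset hx')).2 hx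

theorem defect_sdiff_nbhd_le (hX : IsFragment k J X) :
    defect k J (powersetCard k univ \ nbhd k J X) ≤ defect k J X := by
  have h₁ := card_le_card (nbhd_sdiff_nbhd_subset (k := k) (J := J) (X := X))
  rw [card_sdiff_of_subset hX.subset] at h₁
  have h₂ := card_le_card hX.subset
  have h₃ := card_sdiff_of_subset (nbhd_subset (k := k) (J := J) (X := X))
  have h₄ := card_le_card (nbhd_subset (k := k) (J := J) (X := X))
  simp only [defect]
  omega

end IsFragment

structure IsAtom (k : ℕ) (J : Finset ℕ) (A : Finset (Finset α)) : Prop where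
  isFragment : IsFragment k J A
  defect_le : ∀ ⦃X : Finset (Finset α)⦄, IsFragment k J X → defect k J A ≤ defect k J X
  card_le : ∀ ⦃X : Finset (Finset α)⦄,
    IsFragment k J X → defect k J X = defect k J A → #A ≤ #X

theorem IsFragment.exists_isAtom (hX : IsFragment k J X) :
    ∃ A : Finset (Finset α), IsAtom k J A := by
  classical
  set 𝒳 := (univ : Finset (Finset (Finset α))).filter (IsFragment k J)
  obtain ⟨Y, hY, hYmin⟩ := exists_min_image 𝒳 (defect k J) ⟨X, by simpa [𝒳] using hX⟩
  obtain ⟨A, hA, hAmin⟩ := exists_min_image ({Z ∈ 𝒳 | defect k J Z = defect k J Y}) card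
    ⟨Y, by simpa using hY⟩
  simp only [𝒳, mem_filter, mem_univ, true_and] at hY hYmin hA hAmin
  exact ⟨A, hA.1, fun Z hZ ↦ hA.2 ▸ hYmin Z hZ, fun Z hZ hZA ↦ hAmin Z ⟨hZ, hZA.trans hA.2⟩⟩

namespace IsAtom

variable {A : Finset (Finset α)} (hα : Fintype.card α = 2 * k) (hA : IsAtom k J A)
include hα hA

theorem card_add_card_nbhd_le : #A + #(nbhd k J A) ≤ #(powersetCard k (univ : Finset α)) := by
  have hD := hA.isFragment.sdiff_nbhd hα
  have hdefect := le_antisymm (hA.isFragment.defect_sdiff_nbhd_le) (hA.defect_le hD)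
  have := hA.card_le hD hdefect
  rw [card_sdiff_of_subset nbhd_subset] at this
  have := card_le_card (nbhd_subset (k := k) (J := J) (X := A))
  omega

/-- Hamidoune's intersection property of atoms, for translates. -/
theorem smul_eq_of_nonempty (g : Perm α) (h : (g • A ∩ A).Nonempty) : g • A = A := by
  have hY := hA.isFragment.smul g
  have hYd : defect k J (g • A) = defect k J A := defect_smul g
  have hYc : #(g • A) = #A := card_smul_finset g A
  have hZ := hY.inter hA.isFragment h
  by_cases hU : nbhd k J (g • A ∪ A) = powersetCard k univ
  · -- then `#V - #(nbhd A) < #A`, against `card_add_card_nbhd_le`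
    have h₁ := hA.card_add_card_nbhd_le hα
    have h₂ := hA.defect_le hZ
    have h₃ := card_le_card (nbhd_inter_subset (k := k) (J := J) (X := g • A) (Y := A))
    have h₄ := card_union_add_card_inter (nbhd k J (g • A)) (nbhd k J A)
    rw [← nbhd_union, hU] at h₄
    have h₅ := h.card_pos
    simp only [defect] at hYd h₂
    omega
  · have hsub := defect_inter_add_defect_union_le (k := k) (J := J) (X := g • A) (Y := A)
    have hU' := hA.defect_le (hY.union hA.isFragment hU)
    have hZd : defect k J (g • A ∩ A) = defect k J A :=
      le_antisymm (by linarith) (hA.defect_le hZ)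
    have hAY : A ⊆ g • A :=
      inter_eq_right.1 (eq_of_subset_of_card_le inter_subset_right (hA.card_le hZ hZd))
    exact (eq_of_subset_of_card_le hAY hYc.le).symm

theorem isBlock : IsBlock (Perm α) (A : Set (Finset α)) := by
  refine isBlock_iff_smul_eq_of_nonempty.2 fun g hg ↦ ?_
  rw [← coe_smul_finset, ← coe_inter, coe_nonempty] at hg
  rw [← coe_smul_finset, hA.smul_eq_of_nonempty hα g hg]

theorem eq_pair (hJ : J ⊆ range (k + 1)) (hJne : J.Nonempty) {x : Finset α} (hx : x ∈ A) :
    A = {x, xᶜ} := by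
  refine subset_antisymm (fun y hy ↦ ?_) (insert_subset hx
    (singleton_subset_iff.2 (hA.isFragment.compl_mem x hx)))
  have hxk : #x = k := by simpa using hA.isFragment.subset hx
  have hyk : #y = k := by simpa using hA.isFragment.subset hy
  by_contra hne
  simp only [mem_insert, mem_singleton, not_or] at hne
  have hxy : (x ∩ y).Nonempty := by
    rw [← not_disjoint_iff_nonempty_inter]
    intro hdisj
    exact hne.2 (eq_of_subset_of_card_le (subset_compl_iff_disjoint_left.2 hdisj)
      (by rw [card_compl, hα, hxk, hyk]; omega))
  have hyx : (x \ y).Nonempty := by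
    rw [sdiff_nonempty]
    exact fun hsub ↦ hne.1 (eq_of_subset_of_card_le hsub (hxk.trans hyk.symm).ge).symm
  have hall : powersetCard k univ ⊆ A := fun s hs ↦
    mem_of_isBlock (hA.isBlock hα) hx hy (hA.isFragment.compl_mem y hy) hxy hyx
      (hxk.trans (mem_powersetCard.1 hs).2.symm)
  exact hA.isFragment.nbhd_ne (subset_antisymm nbhd_subset
    ((nbhd_powersetCard hα hJ hJne).symm.subset.trans (nbhd_mono hall)))

end IsAtom

theorem IsFragment.card_add_sum_le (hk : 0 < k) (hα : Fintype.card α = 2 * k)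
    (hJ : J ⊆ range (k + 1)) (hJsymm : ∀ j ≤ k, j ∈ J ↔ k - j ∈ J) (hJne : J.Nonempty)
    (hX : IsFragment k J X) :
    #X + ∑ j ∈ J, k.choose j * k.choose (k - j) ≤ #(nbhd k J X) + 2 := by
  obtain ⟨A, hA⟩ := hX.exists_isAtom
  obtain ⟨x, hx⟩ := hA.isFragment.nonempty
  have hxk : #x = k := by simpa using hA.isFragment.subset hx
  have : Nonempty α := Fintype.card_pos_iff.1 (by omega)
  have hpair : ({x, xᶜ} : Finset (Finset α)) = {x} ∪ ({x} : Finset (Finset α)).image compl :=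
    by rw [image_singleton, ← insert_eq]
  have hdefect : defect k J A = ((∑ j ∈ J, k.choose j * k.choose (k - j) : ℕ) : ℤ) - 2 := by
    rw [defect, hA.eq_pair hα hJ hJne hx, hpair, nbhd_union_image_compl hJsymm,
      card_nbhd_singleton hα hJ hxk, ← hpair, card_pair ne_compl_self, Nat.cast_two]
  have := hA.defect_le hX
  rw [hdefect, defect] at this
  omega

theorem card_add_card_add_sum_le_of_disjoint_nbhd (hk : 0 < k) (hα : Fintype.card α = 2 * k)
    (hJ : J ⊆ range (k + 1)) (hJsymm : ∀ j ≤ k, j ∈ J ↔ k - j ∈ J) (hJne : J.Nonempty)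
    {A B : Finset (Finset α)} (hA : A.Nonempty) (hB : B.Nonempty) (hAk : ∀ a ∈ A, #a = k)
    (hBk : ∀ b ∈ B, #b = k) (hAB : Disjoint B (nbhd k J A)) :
    #A + #B + ∑ j ∈ J, k.choose j * k.choose (k - j) ≤
      #(powersetCard k (univ : Finset α)) + 2 := by
  have hN := nbhd_union_image_compl (k := k) (X := A) hJsymm
  have hX : IsFragment k J (A ∪ A.image compl) := by
    refine ⟨fun x hx ↦ ?_, fun x hx ↦ ?_, hA.mono subset_union_left, fun h ↦ ?_⟩
    · obtain hx | ⟨a, ha, rfl⟩ := mem_union.1 hx |>.imp_right mem_image.1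
      · simpa using hAk x hx
      · exact compl_mem_powersetCard hα (by simpa using hAk a ha)
    · obtain hx | ⟨a, ha, rfl⟩ := mem_union.1 hx |>.imp_right mem_image.1
      · exact mem_union_right _ (mem_image_of_mem _ hx)
      · exact mem_union_left _ (by rwa [compl_compl])
    · obtain ⟨b, hb⟩ := hB
      have hbN : b ∈ nbhd k J A := by rw [← hN, h]; simpa using hBk b hb
      exact disjoint_left.1 hAB hb hbN
  have hexpand := hX.card_add_sum_le hk hα hJ hJsymm hJne
  have hBN : #B + #(nbhd k J A) ≤ #(powersetCard k (univ : Finset α)) := by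
    rw [← card_union_of_disjoint hAB]
    exact card_le_card (union_subset (fun b hb ↦ by simpa using hBk b hb) nbhd_subset)
  have hAX : #A ≤ #(A ∪ A.image compl) := card_le_card subset_union_left
  rw [hN] at hexpand
  omega

end GeneralizedJohnson

open GeneralizedJohnson

theorem card_powersetCard_half (k : ℕ) :
    #(powersetCard k (univ : Finset (Fin (2 * k)))) =
      ∑ i ∈ range (k + 1), k.choose i * k.choose (k - i) := by
  rw [card_powersetCard, card_univ, Fintype.card_fin, two_mul, Nat.add_choose_eq,
    Nat.sum_antidiagonal_eq_sum_range_succ_mk]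

theorem stmt5 {k : ℕ} (hk : 2 ≤ k)
    (L : Finset ℕ) (hL : L ⊆ Finset.range (k + 1))
    (hsym : ∀ i ≤ k, (i ∈ L ↔ k - i ∈ L))
    (hLne : L ≠ Finset.range (k + 1))
    (A B : Finset (Finset (Fin (2 * k)))) (hA : A.Nonempty) (hB : B.Nonempty)
    (hAk : ∀ a ∈ A, a.card = k) (hBk : ∀ b ∈ B, b.card = k)
    (hcross : ∀ a ∈ A, ∀ b ∈ B, (a ∩ b).card ∈ L) :
    A.card + B.card ≤ ∑ i ∈ L, Nat.choose k i * Nat.choose k (k - i) + 2 := by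
  have hJsymm : ∀ j ≤ k, j ∈ range (k + 1) \ L ↔ k - j ∈ range (k + 1) \ L := fun j hj ↦ by
    simp only [mem_sdiff, mem_range, hsym j hj, and_congr_left_iff]
    omega
  have hJne : (range (k + 1) \ L).Nonempty :=
    sdiff_nonempty.2 fun h ↦ hLne (subset_antisymm hL h)
  have hAB : Disjoint B (nbhd k (range (k + 1) \ L) A) := disjoint_left.2 fun b hb hbA ↦ by
    obtain ⟨-, a, ha, hab⟩ := mem_nbhd.1 hbA
    exact (mem_sdiff.1 hab).2 (hcross a ha b hb)
  have := card_add_card_add_sum_le_of_disjoint_nbhd (by omega) (Fintype.card_fin _) sdiff_subset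
    hJsymm hJne hA hB hAk hBk hAB
  rw [card_powersetCard_half, ← sum_sdiff hL] at this
  omega
end

section
/- Let L ⊆ {0,...,k} with min L = ℓ₁ ≥ 1, and let A₁,...,A_r ⊆ C([n],k) be non-empty pairwise cross L-intersecting families with |A₁| ≤ ... ≤ |A_r|. If some Aᵢ with i ≤ r-1 contains two sets A₁', A₂' with |A₁' ∩ A₂'| ≤ ℓ₁ - 1, then |A_r| ≤ Σ_{j=ℓ₁+1}^{k} C(|A₁' ∪ A₂'|, j)·C(n - |A₁' ∪ A₂'|, k - j). -/
open Finset

theorem stmt9 {n k r : ℕ} (hk : 2 ≤ k) (hr : 2 ≤ r)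
    (L : Finset ℕ) (hL : L ⊆ Finset.range (k + 1)) (hLne : L.Nonempty)
    (ℓ₁ : ℕ) (hℓ₁ : 1 ≤ ℓ₁) (hmin : L.min' hLne = ℓ₁)
    (𝒜 : Fin r → Finset (Finset (Fin n)))
    (hne : ∀ i, (𝒜 i).Nonempty)
    (hunif : ∀ i, ∀ a ∈ 𝒜 i, a.card = k)
    (hmono : ∀ i j : Fin r, i ≤ j → (𝒜 i).card ≤ (𝒜 j).card)
    (hcross : ∀ i j : Fin r, i ≠ j → ∀ a ∈ 𝒜 i, ∀ b ∈ 𝒜 j, (a ∩ b).card ∈ L)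
    (i : Fin r) (hi : (i : ℕ) < r - 1)
    (A₁' A₂' : Finset (Fin n)) (hA₁ : A₁' ∈ 𝒜 i) (hA₂ : A₂' ∈ 𝒜 i)
    (hsmall : (A₁' ∩ A₂').card ≤ ℓ₁ - 1) :
    (𝒜 ⟨r - 1, by omega⟩).card ≤
      ∑ j ∈ Finset.Icc (ℓ₁ + 1) k,
        Nat.choose (A₁' ∪ A₂').card j * Nat.choose (n - (A₁' ∪ A₂').card) (k - j) := by
  set U := A₁' ∪ A₂' with hU
  set last : Fin r := ⟨r - 1, by omega⟩ with hlast
  have hilast : i ≠ last := by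
    intro h
    rw [h] at hi
    simp [hlast] at hi
  have key : ∀ F ∈ 𝒜 last, ℓ₁ + 1 ≤ (F ∩ U).card ∧ (F ∩ U).card ≤ k := by
    intro F hF
    have h1 : ℓ₁ ≤ (F ∩ A₁').card := by
      have := hcross last i (Ne.symm hilast) F hF A₁' hA₁
      rw [← hmin]; exact Finset.min'_le L _ this
    have h2 : ℓ₁ ≤ (F ∩ A₂').card := by
      have := hcross last i (Ne.symm hilast) F hF A₂' hA₂
      rw [← hmin]; exact Finset.min'_le L _ this
    have h3 : ((F ∩ A₁') ∩ (F ∩ A₂')).card ≤ ℓ₁ - 1 := by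
      refine le_trans (Finset.card_le_card ?_) hsmall
      intro x hx
      simp only [mem_inter] at hx ⊢
      exact ⟨hx.1.2, hx.2.2⟩
    have h4 : (F ∩ A₁') ∪ (F ∩ A₂') = F ∩ U := by
      rw [hU, inter_union_distrib_left]
    have h5 := Finset.card_union_add_card_inter (F ∩ A₁') (F ∩ A₂')
    rw [h4] at h5
    have h6 : (F ∩ U).card ≤ F.card := card_le_card inter_subset_left
    have hc1 : (F ∩ A₁').card ≤ F.card := card_le_card inter_subset_left
    have hFk := hunif last F hF
    constructor <;> omega
  calc (𝒜 last).card ≤ ((Finset.Icc (ℓ₁ + 1) k).biUnion (fun j =>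
        ((U.powersetCard j) ×ˢ ((univ \ U).powersetCard (k - j))).image
          (fun p => p.1 ∪ p.2))).card := by
        apply card_le_card
        intro F hF
        obtain ⟨hj1, hj2⟩ := key F hF
        rw [mem_biUnion]
        refine ⟨(F ∩ U).card, mem_Icc.mpr ⟨hj1, hj2⟩, ?_⟩
        rw [mem_image]
        refine ⟨(F ∩ U, F \ U), ?_, ?_⟩
        · rw [mem_product]
          constructor
          · rw [mem_powersetCard]
            exact ⟨inter_subset_right, rfl⟩
          · rw [mem_powersetCard]
            constructor
            · intro x hx
              simp only [mem_sdiff, mem_univ, true_and] at hx ⊢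
              exact hx.2
            · show (F \ U).card = k - (F ∩ U).card
              have h7 := Finset.card_inter_add_card_sdiff F U
              have hFk := hunif last F hF
              omega
        · show F ∩ U ∪ F \ U = F
          ext x
          simp only [mem_union, mem_inter, mem_sdiff]
          tauto
    _ ≤ ∑ j ∈ Finset.Icc (ℓ₁ + 1) k,
          Nat.choose U.card j * Nat.choose (n - U.card) (k - j) := by
        refine le_trans (card_biUnion_le) (Finset.sum_le_sum fun j hj => ?_)
        refine le_trans card_image_le ?_
        rw [card_product, card_powersetCard, card_powersetCard,
          card_sdiff_of_subset (subset_univ U), card_univ, Fintype.card_fin]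
end

section
/- Let k ≥ 2, n ≥ k, r ≥ 2, and let L ⊆ [0,k] with 0 ∈ L, k ∈ L. Let s be the minimum non-negative integer not in L, so 1 ≤ s ≤ k-1 (assuming L ≠ [0,k]). Suppose A₁,...,A_r ⊆ C([n],k) are pairwise cross L-intersecting, and s = k-1. Then for any S ∈ C([n], k-1), if at least two of the families A₁(S),...,A_r(S) are non-empty, there exists x ∈ [n]\S such that Aᵢ(S) ⊆ {S ∪ {x}} for every i with Aᵢ(S) ≠ ∅, and hence Σᵢ |Aᵢ(S)| ≤ r. -/
open Finset

theorem stmt11 {n k r : ℕ} (hk : 2 ≤ k) (hkn : k ≤ n) (hr : 2 ≤ r)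
    (L : Finset ℕ) (hL : L ⊆ Finset.range (k + 1))
    (h0L : 0 ∈ L) (hkL : k ∈ L)
    (hbelow : ∀ j, j < k - 1 → j ∈ L) (hsL : k - 1 ∉ L)
    (𝒜 : Fin r → Finset (Finset (Fin n)))
    (hunif : ∀ i, ∀ a ∈ 𝒜 i, a.card = k)
    (hcross : ∀ i j : Fin r, i ≠ j → ∀ a ∈ 𝒜 i, ∀ b ∈ 𝒜 j, (a ∩ b).card ∈ L)
    (S : Finset (Fin n)) (hS : S.card = k - 1)
    (htwo : ∃ i j : Fin r, i ≠ j ∧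
      ((𝒜 i).filter (fun A => S ⊆ A)).Nonempty ∧
      ((𝒜 j).filter (fun A => S ⊆ A)).Nonempty) :
    (∃ x : Fin n, x ∉ S ∧ ∀ i : Fin r, ((𝒜 i).filter (fun A => S ⊆ A)).Nonempty →
      (𝒜 i).filter (fun A => S ⊆ A) ⊆ {insert x S}) ∧
      ∑ i, ((𝒜 i).filter (fun A => S ⊆ A)).card ≤ r := by
  obtain ⟨i₀, j₀, hij, ⟨A₀, hA₀⟩, ⟨B₀, hB₀⟩⟩ := htwo
  have key : ∀ i j : Fin r, i ≠ j → ∀ A ∈ (𝒜 i).filter (fun A => S ⊆ A),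
      ∀ B ∈ (𝒜 j).filter (fun A => S ⊆ A), A = B := by
    intro i j hne A hA B hB
    simp only [mem_filter] at hA hB
    have hAk := hunif i A hA.1
    have hBk := hunif j B hB.1
    have hmem := hcross i j hne A hA.1 B hB.1
    have h1 : k - 1 ≤ (A ∩ B).card := by
      calc k - 1 = S.card := hS.symm
      _ ≤ (A ∩ B).card := card_le_card (subset_inter hA.2 hB.2)
    have h2 : (A ∩ B).card ≤ k := hAk ▸ card_le_card inter_subset_left
    have h3 : (A ∩ B).card ≠ k - 1 := fun h => hsL (h ▸ hmem)
    have h4 : (A ∩ B).card = k := by omega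
    have hiA : A ∩ B = A := eq_of_subset_of_card_le inter_subset_left (by omega)
    have hAB : A ⊆ B := by rw [← hiA]; exact inter_subset_right
    exact eq_of_subset_of_card_le hAB (by omega)
  have hall : ∀ i : Fin r, ∀ A ∈ (𝒜 i).filter (fun A => S ⊆ A), A = A₀ := by
    intro i A hA
    by_cases h : i = i₀
    · subst h
      have h1 : A = B₀ := key i j₀ hij A hA B₀ hB₀
      have h2 : A₀ = B₀ := key i j₀ hij A₀ hA₀ B₀ hB₀
      rw [h1, h2]
    · exact key i i₀ h A hA A₀ hA₀
  simp only [mem_filter] at hA₀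
  have hSA₀ : S ⊆ A₀ := hA₀.2
  have hA₀k : A₀.card = k := hunif i₀ A₀ hA₀.1
  have hcard : (A₀ \ S).card = 1 := by
    rw [card_sdiff_of_subset hSA₀, hA₀k, hS]; omega
  obtain ⟨x, hx⟩ := card_eq_one.mp hcard
  have hxS : x ∉ S := by
    have : x ∈ A₀ \ S := hx ▸ mem_singleton_self x
    exact (mem_sdiff.mp this).2
  have hA₀eq : A₀ = insert x S := by
    apply Finset.Subset.antisymm
    · intro y hy
      by_cases hyS : y ∈ S
      · exact mem_insert_of_mem hyS
      · have : y ∈ A₀ \ S := mem_sdiff.mpr ⟨hy, hyS⟩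
        rw [hx, mem_singleton] at this
        rw [this]; exact mem_insert_self x S
    · intro y hy
      rcases mem_insert.mp hy with h | h
      · have hxA : x ∈ A₀ \ S := hx ▸ mem_singleton_self x
        rw [h]
        exact (mem_sdiff.mp hxA).1
      · exact hSA₀ h
  have hsub : ∀ i : Fin r, (𝒜 i).filter (fun A => S ⊆ A) ⊆ {insert x S} := by
    intro i A hA
    rw [mem_singleton, ← hA₀eq]
    exact hall i A hA
  refine ⟨⟨x, hxS, fun i _ => hsub i⟩, ?_⟩
  calc ∑ i, ((𝒜 i).filter (fun A => S ⊆ A)).card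
      ≤ ∑ _i : Fin r, 1 := by
        apply Finset.sum_le_sum
        intro i _
        calc ((𝒜 i).filter (fun A => S ⊆ A)).card
            ≤ ({insert x S} : Finset (Finset (Fin n))).card := card_le_card (hsub i)
          _ = 1 := card_singleton _
    _ = r := by simp
end

section
/- Let ℓ ≥ 1, and let A₁,...,A_r ⊆ C([n],k) be r-cross [ℓ, s-1]-intersecting families with |A₁| ≤ ... ≤ |A_r|. If there exist i ∈ [r-1] and A₁', A₂' ∈ Aᵢ (or A₁' ∈ Aᵢ, A₂' ∈ Aⱼ with i, j ∈ [r-1] distinct) with |A₁' ∩ A₂'| ≤ ℓ-1, then every A ∈ A_r satisfies |A ∩ (A₁' ∪ A₂')| ≥ ℓ + 1, and hence |A_r| ≤ Σ_{t=ℓ+1}^{k} C(|A₁' ∪ A₂'|, t)·C(n - |A₁' ∪ A₂'|, k - t). -/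
/-!
Every set of the last family meets each set of the other families in at least `ℓ` points: fill the
remaining positions of an `r`-tuple with arbitrary members, and the `r`-wise intersection, of size at
least `ℓ`, lies inside the pairwise one. So `A` meets both `A₁'` and `A₂'` in `ℓ` points while these two
share at most `ℓ - 1`, whence `A` meets `A₁' ∪ A₂'` in at least `ℓ + 1` points. With `B = A₁' ∪ A₂'`, a
`k`-set `A` with `|A ∩ B| = t` is determined by the pair `(A ∩ B, A \ B)` of a `t`-subset of `B` and a
`(k - t)`-subset of its complement; summing over `t ≥ ℓ + 1` gives the bound.
-/

open Finset

section

variable {α : Type*} [DecidableEq α]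

theorem le_card_inter_of_le_card_inf [Fintype α] {ι : Type*} [Fintype ι]
    {𝒜 : ι → Finset (Finset α)} {ℓ : ℕ} (hne : ∀ i, (𝒜 i).Nonempty)
    (hcross : ∀ f : ι → Finset α, (∀ i, f i ∈ 𝒜 i) → ℓ ≤ (univ.inf f).card)
    {p q : ι} (hpq : p ≠ q) {X Y : Finset α} (hX : X ∈ 𝒜 p) (hY : Y ∈ 𝒜 q) :
    ℓ ≤ (X ∩ Y).card := by
  classical
  let f : ι → Finset α := Function.update (Function.update (fun i => (hne i).choose) p X) q Y
  have hfp : f p = X := by simp [f, hpq]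
  have hfq : f q = Y := by simp [f]
  have hf : ∀ i, f i ∈ 𝒜 i := by
    intro i
    rcases eq_or_ne i q with rfl | hiq
    · rwa [hfq]
    rcases eq_or_ne i p with rfl | hip
    · rwa [hfp]
    simpa [f, hiq, hip] using (hne i).choose_spec
  calc ℓ ≤ (univ.inf f).card := hcross f hf
    _ ≤ (X ∩ Y).card := by
      gcongr
      rw [← hfp, ← hfq]
      exact le_inf (inf_le (mem_univ p)) (inf_le (mem_univ q))

theorem card_inter_add_card_inter_le (A X Y : Finset α) :
    (A ∩ X).card + (A ∩ Y).card ≤ (A ∩ (X ∪ Y)).card + (X ∩ Y).card := by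
  rw [← card_union_add_card_inter, ← inter_union_distrib_left]
  gcongr <;> exact inter_subset_right

theorem card_filter_card_inter_eq_le [Fintype α] (B : Finset α) {𝒜 : Finset (Finset α)} {k : ℕ}
    (h𝒜 : ∀ A ∈ 𝒜, A.card = k) (t : ℕ) :
    {A ∈ 𝒜 | (A ∩ B).card = t}.card ≤
      B.card.choose t * (Fintype.card α - B.card).choose (k - t) := by
  calc {A ∈ 𝒜 | (A ∩ B).card = t}.card
      ≤ (powersetCard t B ×ˢ powersetCard (k - t) Bᶜ).card := by
        refine card_le_card_of_injOn (fun A => (A ∩ B, A \ B)) ?_ ?_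
        · intro A hA
          rw [mem_coe, mem_filter] at hA
          have hsplit := card_inter_add_card_sdiff A B
          rw [h𝒜 A hA.1, hA.2] at hsplit
          simp only [mem_coe, mem_product, mem_powersetCard]
          refine ⟨⟨inter_subset_right, hA.2⟩, fun x hx => mem_compl.2 (mem_sdiff.1 hx).2, ?_⟩
          omega
        · intro A _ A' _ h
          simp only [Prod.mk.injEq] at h
          rw [← sdiff_union_inter A B, ← sdiff_union_inter A' B, h.1, h.2]
    _ = B.card.choose t * (Fintype.card α - B.card).choose (k - t) := by
        rw [card_product, card_powersetCard, card_powersetCard, card_compl]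

theorem card_le_sum_choose_of_le_card_inter [Fintype α] (B : Finset α)
    {𝒜 : Finset (Finset α)} {k m : ℕ} (h𝒜 : ∀ A ∈ 𝒜, A.card = k)
    (hm : ∀ A ∈ 𝒜, m ≤ (A ∩ B).card) :
    𝒜.card ≤ ∑ t ∈ Icc m k, B.card.choose t * (Fintype.card α - B.card).choose (k - t) := by
  have hmaps : ∀ A ∈ 𝒜, (A ∩ B).card ∈ Icc m k := fun A hA =>
    mem_Icc.2 ⟨hm A hA, h𝒜 A hA ▸ card_le_card inter_subset_left⟩
  rw [card_eq_sum_card_fiberwise hmaps]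
  exact sum_le_sum fun t _ => card_filter_card_inter_eq_le B h𝒜 t

end

theorem stmt15 {n k r ℓ s : ℕ} (hℓ : 1 ≤ ℓ)
    (𝒜 : Fin r → Finset (Finset (Fin n)))
    (hne : ∀ i, (𝒜 i).Nonempty)
    (hunif : ∀ i, ∀ a ∈ 𝒜 i, a.card = k)
    (hcross : ∀ f : Fin r → Finset (Fin n), (∀ i, f i ∈ 𝒜 i) →
      (Finset.univ.inf f).card ∈ Finset.Icc ℓ (s - 1))
    (i j : Fin r) (hi : (i : ℕ) < r - 1) (hj : (j : ℕ) < r - 1)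
    (A₁' A₂' : Finset (Fin n)) (hA₁ : A₁' ∈ 𝒜 i) (hA₂ : A₂' ∈ 𝒜 j)
    (hsmall : (A₁' ∩ A₂').card ≤ ℓ - 1) :
    (∀ A ∈ 𝒜 ⟨r - 1, by omega⟩, ℓ + 1 ≤ (A ∩ (A₁' ∪ A₂')).card) ∧
      (𝒜 ⟨r - 1, by omega⟩).card ≤
        ∑ t ∈ Finset.Icc (ℓ + 1) k,
          Nat.choose (A₁' ∪ A₂').card t * Nat.choose (n - (A₁' ∪ A₂').card) (k - t) := by
  have hlower : ∀ f : Fin r → Finset (Fin n), (∀ i, f i ∈ 𝒜 i) → ℓ ≤ (univ.inf f).card :=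
    fun f hf => (mem_Icc.1 (hcross f hf)).1
  have hmeet : ∀ A ∈ 𝒜 ⟨r - 1, by omega⟩, ℓ + 1 ≤ (A ∩ (A₁' ∪ A₂')).card := by
    intro A hA
    have h₁ := le_card_inter_of_le_card_inf hne hlower (Fin.ne_of_val_ne hi.ne') hA hA₁
    have h₂ := le_card_inter_of_le_card_inf hne hlower (Fin.ne_of_val_ne hj.ne') hA hA₂
    have hunion := card_inter_add_card_inter_le A A₁' A₂'
    omega
  refine ⟨hmeet, ?_⟩
  simpa using card_le_sum_choose_of_le_card_inter (A₁' ∪ A₂') (hunif _) hmeet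
end

section
/- Let n ≥ 4, k = n-2, and let L ⊆ [0,k] satisfy L ∩ [k-2, k] = {k-1, k}. Then A = B = C([n-1], n-2) (all (n-2)-subsets of [n-1]) are cross L-intersecting, and |A| + |B| = 2(n-1) = Σ_{i∈L} C(k,i)·C(2, k-i) + 1. -/
open Finset

theorem stmt19 {n k : ℕ} (hn : 4 ≤ n) (hk : k = n - 2)
    (L : Finset ℕ) (hL : L ⊆ Finset.range (k + 1))
    (hLcap : L ∩ Finset.Icc (k - 2) k = {k - 1, k})
    (A B : Finset (Finset (Fin n)))
    (hA : A = Finset.powersetCard (n - 2)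
      (Finset.univ.filter (fun x : Fin n => (x : ℕ) < n - 1)))
    (hB : B = A) :
    (∀ a ∈ A, ∀ b ∈ B, (a ∩ b).card ∈ L) ∧
      A.card + B.card = 2 * (n - 1) ∧
      2 * (n - 1) = ∑ i ∈ L, Nat.choose k i * Nat.choose 2 (k - i) + 1 := by
  subst hB
  set S := Finset.univ.filter (fun x : Fin n => (x : ℕ) < n - 1) with hS
  have hScard : S.card = n - 1 := by
    have : S = Finset.Iio (⟨n - 1, by omega⟩ : Fin n) := by
      ext x; simp [hS, Fin.lt_def]
    rw [this, Fin.card_Iio]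
  have hsub : ({k - 1, k} : Finset ℕ) ⊆ L := by
    rw [← hLcap]; exact inter_subset_left
  have hk1 : k - 1 ∈ L := hsub (by simp)
  have hk0 : k ∈ L := hsub (by simp)
  refine ⟨?_, ?_, ?_⟩
  · intro a ha b hb
    rw [hA, Finset.mem_powersetCard] at ha hb
    obtain ⟨haS, hacard⟩ := ha
    obtain ⟨hbS, hbcard⟩ := hb
    have hu : (a ∪ b).card ≤ n - 1 := by
      rw [← hScard]; exact card_le_card (union_subset haS hbS)
    have hie : (a ∩ b).card + (a ∪ b).card = a.card + b.card :=
      card_inter_add_card_union a b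
    have h1 : n - 3 ≤ (a ∩ b).card := by omega
    have h2 : (a ∩ b).card ≤ n - 2 := by
      calc (a ∩ b).card ≤ a.card := card_le_card inter_subset_left
        _ = n - 2 := hacard
    have : (a ∩ b).card = k - 1 ∨ (a ∩ b).card = k := by omega
    rcases this with h | h <;> rw [h] <;> assumption
  · have : B.card = n - 1 := by
      rw [hA, Finset.card_powersetCard, hScard, ← hk]
      have : n - 1 = k + 1 := by omega
      rw [this, Nat.choose_succ_self_right]
    omega
  · have hsum : ∑ i ∈ L, Nat.choose k i * Nat.choose 2 (k - i)
        = ∑ i ∈ ({k - 1, k} : Finset ℕ), Nat.choose k i * Nat.choose 2 (k - i) := by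
      refine (Finset.sum_subset hsub ?_).symm
      intro i hiL hni
      have hik : i < k + 1 := by simpa using hL hiL
      have : i ∉ Finset.Icc (k - 2) k := by
        intro hmem
        exact hni (by rw [← hLcap]; exact mem_inter.2 ⟨hiL, hmem⟩)
      have : i < k - 2 := by
        simp only [Finset.mem_Icc] at this; omega
      have : 2 < k - i := by omega
      rw [Nat.choose_eq_zero_of_lt this, mul_zero]
    rw [hsum]
    have hkk : k - 1 ≠ k := by omega
    rw [Finset.sum_pair hkk]
    have h1 : Nat.choose k (k - 1) = k := by
      have : k = (k - 1) + 1 := by omega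
      rw [this]; simp [Nat.choose_succ_self_right]
    rw [h1, Nat.choose_self]
    have : k - (k - 1) = 1 := by omega
    rw [this, Nat.sub_self]
    simp [Nat.choose]
    omega
end
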